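/- Let (x^k), (y^k), (p^k) be BADMM iterates, where φ and ψ are convex differentiable and either x ↦ L_α(x, y, p) is μ₁-strongly convex for every (y, p) or φ is μ₁-strongly convex, with μ₁ > 0. Then for every k, L_α(x^{k+1}, y^{k+1}, p^{k+1}) − L_α(x^k, y^k, p^k) ≤ −(μ₁/2)‖x^{k+1} − x^k‖² + (1/α)‖p^{k+1} − p^k‖². -/

import Mathlib

/-!
Each half-step of BADMM moves the augmented Lagrangian in a controlled way. The `y`-step
minimizes `L_α + Δ_ψ`, and `Δ_ψ ≥ 0` vanishes on the diagonal, so `L_α` does not increase.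
The `x`-step gains `(μ₁/2)‖x^{k+1} - x^k‖²`: either the minimized function `L_α + Δ_φ` is
`μ₁`-strongly convex and grows quadratically away from its minimizer, or `Δ_φ` itself dominates
`(μ₁/2)‖·‖²`. The dual step changes `L_α` by `⟪p^{k+1} - p^k, Ax^{k+1} - By^{k+1}⟫`, which
equals `(1/α)‖p^{k+1} - p^k‖²`.
-/

open scoped InnerProductSpace

/-- The augmented Lagrangian `L_α(x,y,p)`. -/
noncomputable def augL {n₁ n₂ m : ℕ}
    (A : EuclideanSpace ℝ (Fin n₁) →L[ℝ] EuclideanSpace ℝ (Fin m))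
    (B : EuclideanSpace ℝ (Fin n₂) →L[ℝ] EuclideanSpace ℝ (Fin m))
    (f : EuclideanSpace ℝ (Fin n₁) → ℝ) (g : EuclideanSpace ℝ (Fin n₂) → ℝ)
    (α : ℝ) (x : EuclideanSpace ℝ (Fin n₁)) (y : EuclideanSpace ℝ (Fin n₂))
    (p : EuclideanSpace ℝ (Fin m)) : ℝ :=
  f x + g y + ⟪p, A x - B y⟫_ℝ + α / 2 * ‖A x - B y‖ ^ 2

/-- Bregman distance of a differentiable function `h` with gradient `h'`. -/
noncomputable def bregman {n : ℕ} (h : EuclideanSpace ℝ (Fin n) → ℝ)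
    (h' : EuclideanSpace ℝ (Fin n) → EuclideanSpace ℝ (Fin n))
    (u v : EuclideanSpace ℝ (Fin n)) : ℝ :=
  h u - h v - ⟪h' v, u - v⟫_ℝ

open Filter Set Topology

section StrongConvexity

variable {E : Type*} [NormedAddCommGroup E] [NormedSpace ℝ E] {s : Set E} {m : ℝ} {f : E → ℝ}
  {u v : E}

theorem StrongConvexOn.sub_le_mul (hf : StrongConvexOn s m f) (hv : v ∈ s) (hu : u ∈ s)
    {t : ℝ} (ht₀ : 0 ≤ t) (ht₁ : t ≤ 1) :
    f (v + t • (u - v)) - f v ≤ t * (f u - f v - (1 - t) * (m / 2 * ‖u - v‖ ^ 2)) := by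
  have h := hf.2 hv hu (sub_nonneg.2 ht₁) ht₀ (sub_add_cancel 1 t)
  rw [show (1 - t) • v + t • u = v + t • (u - v) by module, norm_sub_rev] at h
  simp only [smul_eq_mul] at h
  linarith

theorem StrongConvexOn.add_convexOn {g : E → ℝ} (hf : StrongConvexOn s m f)
    (hg : ConvexOn ℝ s g) : StrongConvexOn s m (f + g) := by
  unfold StrongConvexOn at *
  convert hf.add (strongConvexOn_zero.2 hg) using 1
  ext
  simp

theorem StrongConvexOn.add_le_of_isMinOn (hf : StrongConvexOn s m f) (hmin : IsMinOn f s v)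
    (hv : v ∈ s) (hu : u ∈ s) : f v + m / 2 * ‖u - v‖ ^ 2 ≤ f u := by
  have hlim : Tendsto (fun t : ℝ => f u - f v - (1 - t) * (m / 2 * ‖u - v‖ ^ 2)) (𝓝[>] 0)
      (𝓝 (f u - f v - m / 2 * ‖u - v‖ ^ 2)) :=
    tendsto_nhdsWithin_of_tendsto_nhds (Continuous.tendsto' (by fun_prop) _ _ (by simp))
  have hpos : ∀ᶠ t in 𝓝[>] (0 : ℝ), 0 ≤ f u - f v - (1 - t) * (m / 2 * ‖u - v‖ ^ 2) := by
    filter_upwards [Ioo_mem_nhdsGT zero_lt_one] with t ⟨ht₀, ht₁⟩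
    have hmem : v + t • (u - v) ∈ s := hf.1.add_smul_sub_mem hv hu ⟨ht₀.le, ht₁.le⟩
    refine nonneg_of_mul_nonneg_right ?_ ht₀
    linarith [hf.sub_le_mul hv hu ht₀.le ht₁.le, isMinOn_iff.1 hmin _ hmem]
  linarith [ge_of_tendsto hlim hpos]

end StrongConvexity

section Gradient

variable {E : Type*} [NormedAddCommGroup E] [InnerProductSpace ℝ E] [CompleteSpace E]
  {s : Set E} {m : ℝ} {f : E → ℝ} {f' u v : E}

theorem StrongConvexOn.add_inner_add_le_of_hasGradientAt (hf : StrongConvexOn s m f) (hv : v ∈ s) (hu : u ∈ s) (hgrad : HasGradientAt f f' v) :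
    f v + ⟪f', u - v⟫_ℝ + m / 2 * ‖u - v‖ ^ 2 ≤ f u := by
  have hline : HasDerivAt (fun t : ℝ => f (v + t • (u - v))) ⟪f', u - v⟫_ℝ 0 := by
    have hpath : HasDerivAt (fun t : ℝ => v + t • (u - v)) (u - v) 0 := by
      simpa using ((hasDerivAt_id (0 : ℝ)).smul_const (u - v)).const_add v
    have hfderiv : HasFDerivAt f (InnerProductSpace.toDual ℝ E f') (v + (0 : ℝ) • (u - v)) := by
      simpa using hgrad.hasFDerivAt
    exact hfderiv.comp_hasDerivAt 0 hpath
  have hslope := hline.tendsto_slope_zero_right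
  have hlim : Tendsto (fun t : ℝ => f u - f v - (1 - t) * (m / 2 * ‖u - v‖ ^ 2)) (𝓝[>] 0)
      (𝓝 (f u - f v - m / 2 * ‖u - v‖ ^ 2)) :=
    tendsto_nhdsWithin_of_tendsto_nhds (Continuous.tendsto' (by fun_prop) _ _ (by simp))
  have hle : ⟪f', u - v⟫_ℝ ≤ f u - f v - m / 2 * ‖u - v‖ ^ 2 := by
    refine le_of_tendsto_of_tendsto hslope hlim ?_
    filter_upwards [Ioo_mem_nhdsGT zero_lt_one] with t ⟨ht₀, ht₁⟩
    rw [smul_eq_mul, inv_mul_le_iff₀ ht₀]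
    simpa using hf.sub_le_mul hv hu ht₀.le ht₁.le
  linarith

end Gradient

section Bregman

variable {n : ℕ} {s : Set (EuclideanSpace ℝ (Fin n))} {m : ℝ}
  {h F : EuclideanSpace ℝ (Fin n) → ℝ} {h' : EuclideanSpace ℝ (Fin n) → EuclideanSpace ℝ (Fin n)}
  {u v w z : EuclideanSpace ℝ (Fin n)}

@[simp]
theorem bregman_self : bregman h h' u u = 0 := by
  simp [bregman]

theorem StrongConvexOn.le_bregman (hh : StrongConvexOn s m h) (hv : v ∈ s) (hu : u ∈ s)
    (hgrad : HasGradientAt h (h' v) v) : m / 2 * ‖u - v‖ ^ 2 ≤ bregman h h' u v := by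
  have := hh.add_inner_add_le_of_hasGradientAt hv hu hgrad
  rw [bregman]
  linarith

theorem ConvexOn.bregman_nonneg (hh : ConvexOn ℝ s h) (hv : v ∈ s) (hu : u ∈ s)
    (hgrad : HasGradientAt h (h' v) v) : 0 ≤ bregman h h' u v := by
  simpa using (strongConvexOn_zero.2 hh).le_bregman hv hu hgrad

theorem ConvexOn.bregman_left (hh : ConvexOn ℝ s h) (v : EuclideanSpace ℝ (Fin n)) :
    ConvexOn ℝ s fun u => bregman h h' u v := by
  refine ((hh.sub ((innerₗ _ (h' v)).concaveOn hh.1)).add_const (⟪h' v, v⟫_ℝ - h v)).congr ?_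
  intro u _
  simp only [Pi.add_apply, Pi.sub_apply, innerₗ_apply_apply, bregman, inner_sub_right]
  ring

def IsBregmanProx (F h : EuclideanSpace ℝ (Fin n) → ℝ)
    (h' : EuclideanSpace ℝ (Fin n) → EuclideanSpace ℝ (Fin n)) (w z : EuclideanSpace ℝ (Fin n)) :
    Prop :=
  ∀ z', F z + bregman h h' z w ≤ F z' + bregman h h' z' w

theorem IsBregmanProx.le (hz : IsBregmanProx F h h' w z) (hh : ConvexOn ℝ univ h)
    (hgrad : HasGradientAt h (h' w) w) : F z ≤ F w := by
  have hw := hz w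
  rw [bregman_self] at hw
  linarith [hh.bregman_nonneg (mem_univ w) (mem_univ z) hgrad]

theorem IsBregmanProx.add_sq_le_of_strongConvexOn (hz : IsBregmanProx F h h' w z)
    (hF : StrongConvexOn univ m F) (hh : ConvexOn ℝ univ h) (hgrad : HasGradientAt h (h' w) w) :
    F z + m / 2 * ‖z - w‖ ^ 2 ≤ F w := by
  have hmin : IsMinOn (fun z' => F z' + bregman h h' z' w) univ z := isMinOn_univ_iff.2 hz
  have hstrong : StrongConvexOn univ m fun z' => F z' + bregman h h' z' w :=
    hF.add_convexOn (hh.bregman_left w)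
  have hgrowth := hstrong.add_le_of_isMinOn hmin (mem_univ z) (mem_univ w)
  rw [bregman_self, norm_sub_rev] at hgrowth
  linarith [hh.bregman_nonneg (mem_univ w) (mem_univ z) hgrad]

theorem IsBregmanProx.add_sq_le_of_strongConvexOn_kernel (hz : IsBregmanProx F h h' w z)
    (hh : StrongConvexOn univ m h) (hgrad : HasGradientAt h (h' w) w) :
    F z + m / 2 * ‖z - w‖ ^ 2 ≤ F w := by
  have hw := hz w
  rw [bregman_self] at hw
  linarith [hh.le_bregman (mem_univ w) (mem_univ z) hgrad]

end Bregman

theorem augL_add_smul_residual {n₁ n₂ m : ℕ}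
    (A : EuclideanSpace ℝ (Fin n₁) →L[ℝ] EuclideanSpace ℝ (Fin m))
    (B : EuclideanSpace ℝ (Fin n₂) →L[ℝ] EuclideanSpace ℝ (Fin m))
    (f : EuclideanSpace ℝ (Fin n₁) → ℝ) (g : EuclideanSpace ℝ (Fin n₂) → ℝ) (α : ℝ)
    (x : EuclideanSpace ℝ (Fin n₁)) (y : EuclideanSpace ℝ (Fin n₂)) (p : EuclideanSpace ℝ (Fin m)) :
    augL A B f g α x y (p + α • (A x - B y)) =
      augL A B f g α x y p + 1 / α * ‖α • (A x - B y)‖ ^ 2 := by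
  rw [augL, augL, inner_add_left, real_inner_smul_left, real_inner_self_eq_norm_sq, norm_smul,
    Real.norm_eq_abs, mul_pow, sq_abs]
  field_simp
  ring

theorem badmm_lagrangian_descent_general {n₁ n₂ m : ℕ}
    (A : EuclideanSpace ℝ (Fin n₁) →L[ℝ] EuclideanSpace ℝ (Fin m))
    (B : EuclideanSpace ℝ (Fin n₂) →L[ℝ] EuclideanSpace ℝ (Fin m))
    (f : EuclideanSpace ℝ (Fin n₁) → ℝ) (g : EuclideanSpace ℝ (Fin n₂) → ℝ)
    (α : ℝ)
    (φ : EuclideanSpace ℝ (Fin n₁) → ℝ)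
    (φ' : EuclideanSpace ℝ (Fin n₁) → EuclideanSpace ℝ (Fin n₁))
    (hφconv : ConvexOn ℝ Set.univ φ)
    (hφdiff : ∀ u, HasGradientAt φ (φ' u) u)
    (ψ : EuclideanSpace ℝ (Fin n₂) → ℝ)
    (ψ' : EuclideanSpace ℝ (Fin n₂) → EuclideanSpace ℝ (Fin n₂))
    (hψconv : ConvexOn ℝ Set.univ ψ)
    (hψdiff : ∀ u, HasGradientAt ψ (ψ' u) u)
    (μ₁ : ℝ)
    (hsc : (∀ (y : EuclideanSpace ℝ (Fin n₂)) (p : EuclideanSpace ℝ (Fin m)),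
          ConvexOn ℝ Set.univ (fun x => augL A B f g α x y p - μ₁ / 2 * ‖x‖ ^ 2)) ∨
        ConvexOn ℝ Set.univ (fun x => φ x - μ₁ / 2 * ‖x‖ ^ 2))
    (x : ℕ → EuclideanSpace ℝ (Fin n₁)) (y : ℕ → EuclideanSpace ℝ (Fin n₂))
    (p : ℕ → EuclideanSpace ℝ (Fin m))
    (hy : ∀ k, ∀ y' : EuclideanSpace ℝ (Fin n₂),
      augL A B f g α (x k) (y (k + 1)) (p k) + bregman ψ ψ' (y (k + 1)) (y k) ≤
        augL A B f g α (x k) y' (p k) + bregman ψ ψ' y' (y k))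
    (hx : ∀ k, ∀ x' : EuclideanSpace ℝ (Fin n₁),
      augL A B f g α (x (k + 1)) (y (k + 1)) (p k) + bregman φ φ' (x (k + 1)) (x k) ≤
        augL A B f g α x' (y (k + 1)) (p k) + bregman φ φ' x' (x k))
    (hp : ∀ k, p (k + 1) = p k + α • (A (x (k + 1)) - B (y (k + 1)))) :
    ∀ k : ℕ,
      augL A B f g α (x (k + 1)) (y (k + 1)) (p (k + 1))
          - augL A B f g α (x k) (y k) (p k) ≤
        -(μ₁ / 2) * ‖x (k + 1) - x k‖ ^ 2 + 1 / α * ‖p (k + 1) - p k‖ ^ 2 := by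
  intro k
  have hy_step : augL A B f g α (x k) (y (k + 1)) (p k) ≤ augL A B f g α (x k) (y k) (p k) :=
    IsBregmanProx.le (F := fun y' => augL A B f g α (x k) y' (p k)) (hy k) hψconv (hψdiff _)
  have hx_step : augL A B f g α (x (k + 1)) (y (k + 1)) (p k) + μ₁ / 2 * ‖x (k + 1) - x k‖ ^ 2 ≤
      augL A B f g α (x k) (y (k + 1)) (p k) := by
    have hprox : IsBregmanProx (fun x' => augL A B f g α x' (y (k + 1)) (p k)) φ φ' (x k)
        (x (k + 1)) := hx k
    rcases hsc with hL | hφ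
    · exact hprox.add_sq_le_of_strongConvexOn (strongConvexOn_iff_convex.2 (hL _ _)) hφconv
        (hφdiff _)
    · exact hprox.add_sq_le_of_strongConvexOn_kernel (strongConvexOn_iff_convex.2 hφ) (hφdiff _)
  have hp_step : augL A B f g α (x (k + 1)) (y (k + 1)) (p (k + 1)) =
      augL A B f g α (x (k + 1)) (y (k + 1)) (p k) + 1 / α * ‖p (k + 1) - p k‖ ^ 2 := by
    rw [hp k, add_sub_cancel_left]
    exact augL_add_smul_residual A B f g α _ _ _
  linarith

theorem badmm_lagrangian_descent {n₁ n₂ m : ℕ} (hn₁ : 0 < n₁) (hn₂ : 0 < n₂) (hm : 0 < m)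
    (A : EuclideanSpace ℝ (Fin n₁) →L[ℝ] EuclideanSpace ℝ (Fin m))
    (B : EuclideanSpace ℝ (Fin n₂) →L[ℝ] EuclideanSpace ℝ (Fin m))
    (f : EuclideanSpace ℝ (Fin n₁) → ℝ) (g : EuclideanSpace ℝ (Fin n₂) → ℝ)
    (hf : Differentiable ℝ f) (α : ℝ) (hα : 0 < α)
    (φ : EuclideanSpace ℝ (Fin n₁) → ℝ)
    (φ' : EuclideanSpace ℝ (Fin n₁) → EuclideanSpace ℝ (Fin n₁))
    (hφconv : ConvexOn ℝ Set.univ φ)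
    (hφdiff : ∀ u, HasGradientAt φ (φ' u) u)
    (ψ : EuclideanSpace ℝ (Fin n₂) → ℝ)
    (ψ' : EuclideanSpace ℝ (Fin n₂) → EuclideanSpace ℝ (Fin n₂))
    (hψconv : ConvexOn ℝ Set.univ ψ)
    (hψdiff : ∀ u, HasGradientAt ψ (ψ' u) u)
    (μ₁ : ℝ) (hμ₁ : 0 < μ₁)
    (hsc : (∀ (y : EuclideanSpace ℝ (Fin n₂)) (p : EuclideanSpace ℝ (Fin m)),
          ConvexOn ℝ Set.univ (fun x => augL A B f g α x y p - μ₁ / 2 * ‖x‖ ^ 2)) ∨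
        ConvexOn ℝ Set.univ (fun x => φ x - μ₁ / 2 * ‖x‖ ^ 2))
    (x : ℕ → EuclideanSpace ℝ (Fin n₁)) (y : ℕ → EuclideanSpace ℝ (Fin n₂))
    (p : ℕ → EuclideanSpace ℝ (Fin m))
    (hy : ∀ k, ∀ y' : EuclideanSpace ℝ (Fin n₂),
      augL A B f g α (x k) (y (k + 1)) (p k) + bregman ψ ψ' (y (k + 1)) (y k) ≤
        augL A B f g α (x k) y' (p k) + bregman ψ ψ' y' (y k))
    (hx : ∀ k, ∀ x' : EuclideanSpace ℝ (Fin n₁),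
      augL A B f g α (x (k + 1)) (y (k + 1)) (p k) + bregman φ φ' (x (k + 1)) (x k) ≤
        augL A B f g α x' (y (k + 1)) (p k) + bregman φ φ' x' (x k))
    (hp : ∀ k, p (k + 1) = p k + α • (A (x (k + 1)) - B (y (k + 1)))) :
    ∀ k : ℕ,
      augL A B f g α (x (k + 1)) (y (k + 1)) (p (k + 1))
          - augL A B f g α (x k) (y k) (p k) ≤
        -(μ₁ / 2) * ‖x (k + 1) - x k‖ ^ 2 + 1 / α * ‖p (k + 1) - p k‖ ^ 2 :=
  badmm_lagrangian_descent_general A B f g α φ φ' hφconv hφdiff ψ ψ' hψconv hψdiff μ₁ hsc x y p hy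
    hx hp
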